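/- Let X be a median algebra and let a,b ∈ X be adjacent (i.e., [a,b] = {a,b}) with a ≠ b. Then the wall determined by a,b, namely the partition {S^b_a, S^a_b} where S^b_a = {x : a ∈ [x,b]} and S^a_b = {x : b ∈ [x,a]}, is the unique wall of X separating a and b: the two shadows are disjoint convex sets whose union is X, with a ∈ S^b_a and b ∈ S^a_b. -/

import Mathlib

/-- A median algebra: a set with a ternary operation `m` that is symmetric
(generated by the two transpositions), satisfies `m a b b = b`, and
`m (m a b d) c d = m (m a c d) b d`. -/
structure MedianAlgebra (X : Type*) where
  m : X → X → X → X
  swap12 : ∀ a b c, m a b c = m b a c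
  swap23 : ∀ a b c, m a b c = m a c b
  absorb : ∀ a b, m a b b = b
  med_assoc : ∀ a b c d, m (m a b d) c d = m (m a c d) b d

namespace MedianAlgebra

variable {X : Type*}

/-- The median interval `[a,b] = {c : m a c b = c}`. -/
def interval (M : MedianAlgebra X) (a b : X) : Set X := {c | M.m a c b = c}

/-- A subset is convex if it contains the interval between any two of its points. -/
def IsConvex (M : MedianAlgebra X) (C : Set X) : Prop :=
  ∀ x ∈ C, ∀ y ∈ C, M.interval x y ⊆ C

/-- The shadow `S^a_b = {w : m a w b = b}` (i.e. `b ∈ [a,w]`). -/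
def shadow (M : MedianAlgebra X) (a b : X) : Set X := {w | M.m a w b = b}

/-- The branch `B^a_b = {w : m a w b ≠ b}`, complement of the shadow. -/
def branch (M : MedianAlgebra X) (a b : X) : Set X := {w | M.m a w b ≠ b}

/-- The relation `x ≤_u y` iff `m u x y = x`. -/
def leI (M : MedianAlgebra X) (u x y : X) : Prop := M.m u x y = x

/-- `[u,v]` is a chain interval: `≤_u` is total on `[u,v]` and the
order-median induced by `≤_u` agrees with `m` on `[u,v]`. -/
def IsChainInterval (M : MedianAlgebra X) (u v : X) : Prop :=
  (∀ x ∈ M.interval u v, ∀ y ∈ M.interval u v, M.leI u x y ∨ M.leI u y x) ∧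
  (∀ x ∈ M.interval u v, ∀ y ∈ M.interval u v, ∀ z ∈ M.interval u v,
      M.leI u x y → M.leI u y z → M.m x y z = y)

end MedianAlgebra

/-!
For every `w`, the gate `m a w b` lies in `[a,b] = {a,b}`, so the shadows `S^b_a` and `S^a_b`
are complementary. Shadows are convex in any median algebra, so they form a wall. For any wall
`W ∋ a`, `Wᶜ ∋ b`, convexity of `Wᶜ` forces `S^b_a ⊆ W` (a point `w ∉ W` with `a ∈ [w,b]` would
put `a` in `Wᶜ`), and symmetrically `S^a_b ⊆ Wᶜ`; complementarity then gives equality.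
-/

namespace MedianAlgebra

variable {X : Type*} (M : MedianAlgebra X) {a b c o p q r u v x y z w : X}

theorem m_comm13 (a b c : X) : M.m a b c = M.m c b a := by
  rw [M.swap12, M.swap23, M.swap12]

theorem m_self_left (a b : X) : M.m a a b = a := by
  rw [m_comm13, M.absorb]

theorem m_self_outer (a b : X) : M.m a b a = a := by
  rw [M.swap23, m_self_left]

theorem mem_interval : c ∈ M.interval a b ↔ M.m a c b = c := Iff.rfl

theorem interval_comm (a b : X) : M.interval a b = M.interval b a := by
  ext c
  rw [mem_interval, mem_interval, m_comm13]

theorem m_mem_interval (a b c : X) : M.m a b c ∈ M.interval a c := by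
  rw [mem_interval, M.swap12]
  have h := M.med_assoc a b a c
  rwa [m_self_left] at h

theorem mem_interval_of_mem_of_mem (hp : p ∈ M.interval o q) (hq : q ∈ M.interval o r) :
    q ∈ M.interval p r := by
  rw [mem_interval] at *
  calc M.m p q r = M.m (M.m o p q) r q := by rw [hp, M.swap23]
    _ = M.m (M.m o r q) p q := M.med_assoc o p r q
    _ = q := by rw [M.swap23 o r q, hq, m_self_outer]

theorem interval_subset_interval (h : c ∈ M.interval x a) :
    M.interval x c ⊆ M.interval x a := by
  intro d hd
  rw [mem_interval] at *
  calc M.m x d a = M.m (M.m c d x) a x := by rw [m_comm13 M c d x, hd, M.swap12, M.swap23]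
    _ = M.m (M.m c a x) d x := M.med_assoc c d a x
    _ = d := by rw [m_comm13 M c a x, M.swap23 x a c, h, m_comm13, hd]

theorem m_m_right_of_mem_interval (hz : z ∈ M.interval x y) (u : X) :
    M.m x z (M.m x y u) = M.m x z u := by
  rw [mem_interval] at hz
  calc M.m x z (M.m x y u) = M.m (M.m y u x) z x := by
        rw [m_comm13 M y u x, M.swap23 x u y, m_comm13]
    _ = M.m (M.m y z x) u x := (M.med_assoc y z u x).symm
    _ = M.m x z u := by rw [m_comm13 M y z x, hz, m_comm13, M.swap23]

theorem mem_interval_m (hx : v ∈ M.interval u x) (hy : v ∈ M.interval u y) :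
    v ∈ M.interval u (M.m x y u) := by
  rw [mem_interval] at *
  calc M.m u v (M.m x y u) = M.m (M.m x y u) v u := m_comm13 ..
    _ = M.m (M.m x v u) y u := (M.med_assoc x v y u).symm
    _ = v := by rw [m_comm13 M x v u, hx, m_comm13 M v y u, M.swap23 u y v, hy]

theorem mem_shadow : w ∈ M.shadow u v ↔ v ∈ M.interval u w := by
  rw [mem_interval, M.swap23]
  exact Iff.rfl

theorem isConvex_shadow (u v : X) : M.IsConvex (M.shadow u v) := by
  intro x hx y hy z hz
  rw [mem_shadow] at hx hy ⊢
  -- `m x y u` and `m x z u` are the gates of `u` in `[x,y]` and `[x,z]`; the second lies in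
  -- `[x, m x y u] ⊆ [x,v]`, which puts `v` between it and `u`.
  have hvc : v ∈ M.interval u (M.m x y u) := M.mem_interval_m hx hy
  have hcx : M.m x y u ∈ M.interval u x := interval_comm M x u ▸ M.m_mem_interval x y u
  have hcv : M.m x y u ∈ M.interval x v :=
    interval_comm M v x ▸ M.mem_interval_of_mem_of_mem hvc hcx
  have hdc : M.m x z u ∈ M.interval x (M.m x y u) := by
    rw [← M.m_m_right_of_mem_interval hz]
    exact M.m_mem_interval x z _
  have hdv : M.m x z u ∈ M.interval x v := M.interval_subset_interval hcv hdc
  have hvd : v ∈ M.interval (M.m x z u) u :=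
    M.mem_interval_of_mem_of_mem hdv (interval_comm M u x ▸ hx)
  rw [mem_interval] at hvd hx ⊢
  calc M.m u v z = M.m (M.m x v u) z u := by rw [m_comm13 M x v u, hx, M.swap12, M.swap23]
    _ = M.m (M.m x z u) v u := M.med_assoc x v z u
    _ = v := hvd

theorem m_eq_left_or_eq_right (hadj : M.interval a b = {a, b}) (w : X) :
    M.m a w b = a ∨ M.m a w b = b := by
  simpa only [hadj, Set.mem_insert_iff, Set.mem_singleton_iff] using M.m_mem_interval a w b

theorem compl_shadow (hab : a ≠ b) (hadj : M.interval a b = {a, b}) :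
    (M.shadow b a)ᶜ = M.shadow a b := by
  ext w
  change ¬M.m b w a = a ↔ M.m a w b = b
  rw [m_comm13]
  rcases M.m_eq_left_or_eq_right hadj w with h | h <;> simp [h, hab, hab.symm]

theorem shadow_subset_of_isConvex_compl {W : Set X} (hW : M.IsConvex Wᶜ) (ha : a ∈ W)
    (hb : b ∉ W) : M.shadow b a ⊆ W := by
  intro w hw
  by_contra hw'
  exact hW b hb w hw' ((M.mem_shadow).1 hw) ha

end MedianAlgebra

open MedianAlgebra

/-- For an adjacent pair `a ≠ b`, the two shadows form the unique wall of `X`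
separating `a` and `b`. -/
theorem adjacent_unique_wall {X : Type*} (M : MedianAlgebra X) (a b : X)
    (hab : a ≠ b) (hadj : M.interval a b = {a, b}) :
    M.shadow b a ∩ M.shadow a b = ∅ ∧
    M.shadow b a ∪ M.shadow a b = Set.univ ∧
    M.IsConvex (M.shadow b a) ∧ M.IsConvex (M.shadow a b) ∧
    a ∈ M.shadow b a ∧ b ∈ M.shadow a b ∧
    (∀ W₁ W₂ : Set X, M.IsConvex W₁ → M.IsConvex W₂ →
      W₁ ∩ W₂ = ∅ → W₁ ∪ W₂ = Set.univ →
      a ∈ W₁ → b ∈ W₂ → W₁ = M.shadow b a ∧ W₂ = M.shadow a b) := by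
  have hcompl := M.compl_shadow hab hadj
  refine ⟨hcompl ▸ Set.inter_compl_self _, hcompl ▸ Set.union_compl_self _,
    M.isConvex_shadow b a, M.isConvex_shadow a b, M.absorb b a, M.absorb a b, ?_⟩
  intro W₁ W₂ hW₁ hW₂ hdisj hcover ha hb
  obtain rfl : W₂ = W₁ᶜ := (IsCompl.compl_eq ⟨Set.disjoint_iff_inter_eq_empty.2 hdisj,
    codisjoint_iff.2 hcover⟩).symm
  have hsub₁ : M.shadow b a ⊆ W₁ := M.shadow_subset_of_isConvex_compl hW₂ ha hb
  have hsub₂ : M.shadow a b ⊆ W₁ᶜ :=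
    M.shadow_subset_of_isConvex_compl (by rwa [compl_compl]) hb (not_not.2 ha)
  have hW₁ : W₁ = M.shadow b a :=
    hsub₁.antisymm' (Set.compl_subset_compl.1 (hcompl ▸ hsub₂))
  exact ⟨hW₁, hW₁ ▸ hcompl⟩
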